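/- Let D1, D2, N be positive integers with D1 = t1 u1, D2 = t2 u2, gcd(t1 t2, u1 u2) = 1, N | t1 u1 and N | t2 u2. Then the GL(3) Kloosterman sum factors as S^{(N)}(n1, n2, m1, m2; t1 u1, t2 u2) = S^{(gcd(N,t1))}(ū1^2 u2 n1, ū2^2 u1 n2, m1, m2; t1, t2) · S^{(gcd(N,u1))}(t̄1^2 t2 n1, t̄2^2 t1 n2, m1, m2; u1, u2), where ū1 u1 ≡ 1 mod t1 t2 etc. -/

import Mathlib

/-!
Write `D1 = t1 u1`, `D2 = t2 u2` and parametrise every summation variable by its two CRT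
coordinates, e.g. `B1 = ū1 u2 b1 · e + t̄1 t2 β1 · f` with `e ≡ 1 (mod t1 t2)`, `e ≡ 0 (mod u1 u2)`
and `f` the other way round. In these coordinates the summand factors: the compatibility, level
and Bezout conditions split into their `t`- and `u`-parts, and the phase
`(n1 B1 + m1 (Y1 D2 - Z1 B2)) / D1` equals `a / t1 + α / u1` modulo `1`, where `a, α` are the
phases of the two local sums. The summand is not periodic in `B1` modulo `D1`: shifting `B1` by
`D1` is undone by the change of variables `C2 ↦ C2 + B2`, `Y2 ↦ Y2 - Z2`, so only the inner sum
over `C, Y, Z` is periodic in `B1` (and likewise in `B2`), which is enough to reindex `B1, B2`.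
-/

open Finset

/-- `e(x) = exp(2πix)`. -/
noncomputable def eChar (x : ℝ) : ℂ := Complex.exp (2 * Real.pi * Complex.I * x)

/-- Ramanujan sum `r_q(n) = Σ_{a mod q, (a,q)=1} e(an/q)`. -/
noncomputable def ramanujanSum (q : ℕ) (n : ℤ) : ℂ :=
  ∑ a ∈ Finset.range q, if Nat.gcd a q = 1 then eChar ((a : ℝ) * (n : ℝ) / q) else 0

/-- The GL(3) Kloosterman sum `S^{(N)}(n1,n2,m1,m2;D1,D2)`.  The summand is independent of
the choice of `(Y_j, Z_j)` with `Y_j B_j + Z_j C_j ≡ 1 mod D_j`; since there are exactly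
`D_j` such pairs modulo `D_j`, we sum over all of them and divide by `D1 * D2`. -/
noncomputable def Kloosterman3 (N : ℕ) (n1 n2 m1 m2 : ℤ) (D1 D2 : ℕ) : ℂ :=
  (1 / ((D1 : ℂ) * (D2 : ℂ))) *
  ∑ B1 ∈ range D1, ∑ C1 ∈ range D1, ∑ Y1 ∈ range D1, ∑ Z1 ∈ range D1,
  ∑ B2 ∈ range D2, ∑ C2 ∈ range D2, ∑ Y2 ∈ range D2, ∑ Z2 ∈ range D2,
    if ((D1 : ℤ) * C2 + (B1 : ℤ) * B2 + (D2 : ℤ) * C1) % ((D1 : ℤ) * D2) = 0 ∧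
       Nat.gcd (Nat.gcd B1 C1) D1 = 1 ∧ Nat.gcd (Nat.gcd B2 C2) D2 = 1 ∧
       (N : ℤ) ∣ (B1 : ℤ) ∧
       ((Y1 : ℤ) * B1 + (Z1 : ℤ) * C1) % (D1 : ℤ) = 1 % (D1 : ℤ) ∧
       ((Y2 : ℤ) * B2 + (Z2 : ℤ) * C2) % (D2 : ℤ) = 1 % (D2 : ℤ) then
      eChar (((n1 * B1 + m1 * ((Y1 : ℤ) * D2 - (Z1 : ℤ) * B2) : ℤ) : ℝ) / D1 +
             ((n2 * B2 + m2 * ((Y2 : ℤ) * D1 - (Z2 : ℤ) * B1) : ℤ) : ℝ) / D2)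
    else 0

open Function

lemma Int.ModEq.modEq_iff_left {n a b c : ℤ} (h : a ≡ b [ZMOD n]) :
    a ≡ c [ZMOD n] ↔ b ≡ c [ZMOD n] :=
  ⟨h.symm.trans, h.trans⟩

lemma Int.modEq_mul_iff_of_coprime {m n : ℕ} (h : m.Coprime n) {a b : ℤ} :
    a ≡ b [ZMOD m * n] ↔ a ≡ b [ZMOD m] ∧ a ≡ b [ZMOD n] :=
  (Int.modEq_and_modEq_iff_modEq_mul (by simpa using h)).symm

lemma Nat.coprime_gcd_of_modEq {B C D : ℕ} {Y Z : ℤ} (h : Y * B + Z * C ≡ 1 [ZMOD D]) :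
    Nat.Coprime (B.gcd C) D := by
  rw [← Nat.isCoprime_iff_coprime]
  obtain ⟨k, hk⟩ := Int.modEq_iff_add_fac.1 h
  obtain ⟨b, hb⟩ := Nat.gcd_dvd_left B C
  obtain ⟨c, hc⟩ := Nat.gcd_dvd_right B C
  refine ⟨Y * b + Z * c, k, ?_⟩
  have hb' : (B : ℤ) = (B.gcd C : ℤ) * b := by exact_mod_cast hb
  have hc' : (C : ℤ) = (B.gcd C : ℤ) * c := by exact_mod_cast hc
  rw [hk, hb', hc']
  ring

lemma eChar_add (x y : ℝ) : eChar (x + y) = eChar x * eChar y := by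
  simp only [eChar, Complex.ofReal_add, mul_add, Complex.exp_add]

lemma eChar_intCast (k : ℤ) : eChar k = 1 := by
  rw [eChar, ← Complex.exp_int_mul_two_pi_mul_I k]
  push_cast
  ring_nf

lemma eChar_add_intCast (x : ℝ) (k : ℤ) : eChar (x + k) = eChar x := by
  rw [eChar_add, eChar_intCast, mul_one]

lemma eChar_intCast_div_of_modEq {A A' : ℤ} {D : ℕ} (h : A ≡ A' [ZMOD D]) :
    eChar (A' / D) = eChar (A / D) := by
  obtain ⟨k, rfl⟩ := Int.modEq_iff_add_fac.1 h
  rcases eq_or_ne D 0 with rfl | hD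
  · simp
  · rw [show ((A + D * k : ℤ) : ℝ) / D = A / D + k by push_cast; field_simp, eChar_add_intCast]

lemma eChar_intCast_div_mul {t u : ℕ} (hcop : t.Coprime u) (ht : t ≠ 0) (hu : u ≠ 0)
    {A a α : ℤ} (ha : A ≡ u * a [ZMOD t]) (hα : A ≡ t * α [ZMOD u]) :
    eChar (A / (t * u : ℕ)) = eChar (a / t) * eChar (α / u) := by
  have h : u * a + t * α ≡ A [ZMOD t * u] :=
    (Int.modEq_mul_iff_of_coprime hcop).2
      ⟨Int.modEq_add_fac_self.trans ha.symm,
        (add_comm (t * α) _ ▸ Int.modEq_add_fac_self).trans hα.symm⟩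
  obtain ⟨k, rfl⟩ := Int.modEq_iff_add_fac.1 h
  rw [← eChar_add, ← eChar_add_intCast (a / t + α / u) k]
  congr 1
  push_cast
  field_simp

section ResidueSystems

variable {M : Type*} [AddCommMonoid M]

lemma Function.Periodic.sum_eq_sum_zmod {F : ℤ → M} {D : ℕ} [NeZero D] (hF : Periodic F D)
    {ι : Type*} {s : Finset ι} {r : ι → ℤ} (hcard : s.card = D)
    (hinj : Set.InjOn (fun i => (r i : ZMod D)) s) :
    ∑ i ∈ s, F (r i) = ∑ z : ZMod D, F z.val := by
  classical
  have hF_val (x : ℤ) : F x = F (x : ZMod D).val := by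
    have := hF.sub_int_mul_eq (x := x) (x / D)
    rw [Int.cast_id] at this
    rw [ZMod.val_intCast, Int.emod_def, mul_comm, this]
  have himage : s.image (fun i => (r i : ZMod D)) = univ :=
    eq_univ_of_card _ (by rw [card_image_of_injOn hinj, hcard, ZMod.card])
  rw [← himage, sum_image hinj]
  exact sum_congr rfl fun i _ => hF_val (r i)

lemma ZMod.natCast_injOn_range (D : ℕ) : Set.InjOn (fun n : ℕ => (n : ZMod D)) (range D) := by
  intro m hm n hn h
  simp only [coe_range, Set.mem_Iio] at hm hn
  simpa [ZMod.natCast_eq_natCast_iff', Nat.mod_eq_of_lt hm, Nat.mod_eq_of_lt hn] using h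

lemma ZMod.intCast_eq_intCast_of_dvd {d n : ℕ} (hd : d ∣ n) {a b : ℤ}
    (h : (a : ZMod n) = b) : (a : ZMod d) = b := by
  simpa using congrArg (ZMod.castHom hd (ZMod d)) h

lemma Function.Periodic.sum_eq_sum_range {F : ℤ → M} {D : ℕ} (hF : Periodic F D)
    {ι : Type*} {s : Finset ι} {r : ι → ℤ} (hcard : s.card = D)
    (hinj : Set.InjOn (fun i => (r i : ZMod D)) s) :
    ∑ i ∈ s, F (r i) = ∑ n ∈ range D, F n := by
  rcases eq_or_ne D 0 with rfl | hD
  · simp [card_eq_zero.1 hcard]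
  have : NeZero D := ⟨hD⟩
  rw [hF.sum_eq_sum_zmod hcard hinj, hF.sum_eq_sum_zmod (card_range D)]
  simpa using ZMod.natCast_injOn_range D

lemma Function.Periodic.sum_range_add {F : ℤ → M} {D : ℕ} (hF : Periodic F D) (a : ℤ) :
    ∑ n ∈ range D, F (n + a) = ∑ n ∈ range D, F n :=
  hF.sum_eq_sum_range (card_range D) fun m hm n hn h =>
    ZMod.natCast_injOn_range D hm hn (by simpa using h)

/-- `(x, ξ) ↦ P x + Q ξ` identifies `ℤ/t × ℤ/u` with `ℤ/tu`. -/
structure IsCRTPair (t u : ℕ) (P Q : ℤ) : Prop where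
  isUnit_left : IsUnit (P : ZMod t)
  left_eq_zero : (P : ZMod u) = 0
  right_eq_zero : (Q : ZMod t) = 0
  isUnit_right : IsUnit (Q : ZMod u)

lemma Function.Periodic.sum_range_mul {F : ℤ → M} {t u : ℕ} (hF : Periodic F (t * u : ℕ))
    {P Q : ℤ} (hPQ : IsCRTPair t u P Q) :
    ∑ n ∈ range (t * u), F n = ∑ x ∈ range t, ∑ ξ ∈ range u, F (P * x + Q * ξ) := by
  rw [← sum_product' (f := fun x ξ : ℕ => F (P * x + Q * ξ))]
  refine (hF.sum_eq_sum_range (by simp) ?_).symm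
  rintro ⟨x, ξ⟩ hx ⟨x', ξ'⟩ hx' h
  simp only [coe_product, Set.mem_prod] at hx hx'
  have ht := ZMod.intCast_eq_intCast_of_dvd (dvd_mul_right t u) h
  have hu := ZMod.intCast_eq_intCast_of_dvd (dvd_mul_left u t) h
  push_cast [hPQ.left_eq_zero, hPQ.right_eq_zero] at ht hu
  simp only [zero_mul, add_zero, zero_add] at ht hu
  rw [Prod.mk.injEq]
  exact ⟨ZMod.natCast_injOn_range t hx.1 hx'.1 (hPQ.isUnit_left.mul_left_cancel ht),
    ZMod.natCast_injOn_range u hx.2 hx'.2 (hPQ.isUnit_right.mul_left_cancel hu)⟩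

end ResidueSystems

def IsCRTIdempotent (t u e : ℤ) : Prop :=
  e ≡ 1 [ZMOD t] ∧ e ≡ 0 [ZMOD u]

namespace IsCRTIdempotent

variable {t u e f : ℤ}

lemma of_dvd {t' u' : ℤ} (he : IsCRTIdempotent t u e) (ht : t' ∣ t) (hu : u' ∣ u) :
    IsCRTIdempotent t' u' e :=
  ⟨he.1.of_dvd ht, he.2.of_dvd hu⟩

lemma modEq_left (he : IsCRTIdempotent t u e) (hf : IsCRTIdempotent u t f) (α β x ξ : ℤ) :
    α * e * x + β * f * ξ ≡ α * x [ZMOD t] := by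
  simpa using ((he.1.mul_left α).mul_right x).add ((hf.2.mul_left β).mul_right ξ)

lemma modEq_right (he : IsCRTIdempotent t u e) (hf : IsCRTIdempotent u t f) (α β x ξ : ℤ) :
    α * e * x + β * f * ξ ≡ β * ξ [ZMOD u] := by
  rw [add_comm]
  exact hf.modEq_left he β α ξ x

lemma isCRTPair {t u : ℕ} (he : IsCRTIdempotent t u e) (hf : IsCRTIdempotent u t f) {α β : ℤ}
    (hα : IsUnit (α : ZMod t)) (hβ : IsUnit (β : ZMod u)) : IsCRTPair t u (α * e) (β * f) := by
  have cast {d : ℕ} {a b : ℤ} (h : a ≡ b [ZMOD d]) : (a : ZMod d) = b :=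
    (ZMod.intCast_eq_intCast_iff _ _ d).2 h
  have he₁ := cast he.1
  have he₀ := cast he.2
  have hf₁ := cast hf.1
  have hf₀ := cast hf.2
  push_cast at he₁ he₀ hf₁ hf₀
  exact ⟨by simpa [he₁], by simp [he₀], by simp [hf₀], by simpa [hf₁]⟩

end IsCRTIdempotent

lemma isUnit_zmod_of_inverses {t1 t2 u1 u2 : ℕ} {u1i u2i : ℤ} (hu1i : u1i * u1 ≡ 1 [ZMOD t1 * t2])
    (hu2i : u2i * u2 ≡ 1 [ZMOD t1 * t2]) {d : ℕ} (hd : d ∣ t1 * t2) :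
    IsUnit (u1 : ZMod d) ∧ IsUnit (u2 : ZMod d) ∧
      IsUnit (u1i : ZMod d) ∧ IsUnit (u2i : ZMod d) := by
  have cast {a b : ℤ} (h : a ≡ b [ZMOD t1 * t2]) : (a : ZMod d) = b :=
    (ZMod.intCast_eq_intCast_iff _ _ d).2 (h.of_dvd (by exact_mod_cast hd))
  have h1 := cast hu1i
  have h2 := cast hu2i
  push_cast at h1 h2
  exact ⟨.of_mul_eq_one _ ((mul_comm _ _).trans h1), .of_mul_eq_one _ ((mul_comm _ _).trans h2),
    .of_mul_eq_one _ h1, .of_mul_eq_one _ h2⟩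

section TripleSums

variable {M : Type*}

def tripleSum [AddCommMonoid M] (D : ℕ) (g : ℤ → ℤ → ℤ → M) : M :=
  ∑ c ∈ range D, ∑ y ∈ range D, ∑ z ∈ range D, g c y z

lemma tripleSum_shear [AddCommMonoid M] {D : ℕ} {g : ℤ → ℤ → ℤ → M}
    (hg₁ : ∀ y z, Periodic (g · y z) D) (hg₂ : ∀ c z, Periodic (g c · z) D) (a : ℤ) :
    tripleSum D (fun c y z => g (c + a) (y - z) z) = tripleSum D g := by
  unfold tripleSum
  calc ∑ c ∈ range D, ∑ y ∈ range D, ∑ z ∈ range D, g (c + a) (y - z) z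
      = ∑ c ∈ range D, ∑ y ∈ range D, ∑ z ∈ range D, g c (y - z) z :=
        Periodic.sum_range_add (F := fun c => ∑ y ∈ range D, ∑ z ∈ range D, g c (y - z) z)
          (fun c => sum_congr rfl fun _ _ => sum_congr rfl fun _ _ => hg₁ _ _ c) a
    _ = ∑ c ∈ range D, ∑ z ∈ range D, ∑ y ∈ range D, g c (y - z) z :=
        sum_congr rfl fun _ _ => sum_comm
    _ = ∑ c ∈ range D, ∑ z ∈ range D, ∑ y ∈ range D, g c y z :=
        sum_congr rfl fun c _ => sum_congr rfl fun z _ => by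
          simpa only [sub_eq_add_neg] using (hg₂ c z).sum_range_add (-z)
    _ = ∑ c ∈ range D, ∑ y ∈ range D, ∑ z ∈ range D, g c y z :=
        sum_congr rfl fun _ _ => sum_comm

lemma tripleSum_mul [NonUnitalNonAssocSemiring M] {t u : ℕ} {P₁ Q₁ P₂ Q₂ P₃ Q₃ : ℤ}
    (h₁ : IsCRTPair t u P₁ Q₁) (h₂ : IsCRTPair t u P₂ Q₂) (h₃ : IsCRTPair t u P₃ Q₃)
    {g : ℤ → ℤ → ℤ → M} (hg₁ : ∀ y z, Periodic (g · y z) (t * u : ℕ))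
    (hg₂ : ∀ c z, Periodic (g c · z) (t * u : ℕ)) (hg₃ : ∀ c y, Periodic (g c y ·) (t * u : ℕ))
    {gt gu : ℤ → ℤ → ℤ → M}
    (h : ∀ x₁ ξ₁ x₂ ξ₂ x₃ ξ₃ : ℤ, g (P₁ * x₁ + Q₁ * ξ₁) (P₂ * x₂ + Q₂ * ξ₂) (P₃ * x₃ + Q₃ * ξ₃) =
      gt x₁ x₂ x₃ * gu ξ₁ ξ₂ ξ₃) :
    tripleSum (t * u) g = tripleSum t gt * tripleSum u gu := by
  unfold tripleSum
  calc ∑ c ∈ range (t * u), ∑ y ∈ range (t * u), ∑ z ∈ range (t * u), g c y z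
      = ∑ c ∈ range (t * u), ∑ y ∈ range (t * u), ∑ x₃ ∈ range t, ∑ ξ₃ ∈ range u,
          g c y (P₃ * x₃ + Q₃ * ξ₃) :=
        sum_congr rfl fun c _ => sum_congr rfl fun y _ => (hg₃ c y).sum_range_mul h₃
    _ = ∑ c ∈ range (t * u), ∑ x₂ ∈ range t, ∑ ξ₂ ∈ range u, ∑ x₃ ∈ range t, ∑ ξ₃ ∈ range u,
          g c (P₂ * x₂ + Q₂ * ξ₂) (P₃ * x₃ + Q₃ * ξ₃) :=
        sum_congr rfl fun c _ => Periodic.sum_range_mul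
          (F := fun y => ∑ x₃ ∈ range t, ∑ ξ₃ ∈ range u, g c y (P₃ * x₃ + Q₃ * ξ₃))
          (fun y => sum_congr rfl fun _ _ => sum_congr rfl fun _ _ => hg₂ c _ y) h₂
    _ = ∑ x₁ ∈ range t, ∑ ξ₁ ∈ range u, ∑ x₂ ∈ range t, ∑ ξ₂ ∈ range u, ∑ x₃ ∈ range t,
          ∑ ξ₃ ∈ range u, g (P₁ * x₁ + Q₁ * ξ₁) (P₂ * x₂ + Q₂ * ξ₂) (P₃ * x₃ + Q₃ * ξ₃) :=
        Periodic.sum_range_mul (F := fun c => ∑ x₂ ∈ range t, ∑ ξ₂ ∈ range u, ∑ x₃ ∈ range t,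
            ∑ ξ₃ ∈ range u, g c (P₂ * x₂ + Q₂ * ξ₂) (P₃ * x₃ + Q₃ * ξ₃))
          (fun c => sum_congr rfl fun _ _ => sum_congr rfl fun _ _ => sum_congr rfl fun _ _ =>
            sum_congr rfl fun _ _ => hg₁ _ _ c) h₁
    _ = _ := by simp only [h, ← sum_mul_sum]

lemma sum_range_mul_sum_range_mul [NonUnitalNonAssocSemiring M] {t₁ u₁ t₂ u₂ : ℕ}
    {P₁ Q₁ P₂ Q₂ : ℤ} (h₁ : IsCRTPair t₁ u₁ P₁ Q₁) (h₂ : IsCRTPair t₂ u₂ P₂ Q₂) {g : ℤ → ℤ → M}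
    (hg₁ : ∀ b, Periodic (g · b) (t₁ * u₁ : ℕ)) (hg₂ : ∀ a, Periodic (g a ·) (t₂ * u₂ : ℕ))
    {gt gu : ℤ → ℤ → M}
    (h : ∀ x₁ ξ₁ x₂ ξ₂ : ℤ, g (P₁ * x₁ + Q₁ * ξ₁) (P₂ * x₂ + Q₂ * ξ₂) = gt x₁ x₂ * gu ξ₁ ξ₂) :
    ∑ a ∈ range (t₁ * u₁), ∑ b ∈ range (t₂ * u₂), g a b =
      (∑ x₁ ∈ range t₁, ∑ x₂ ∈ range t₂, gt x₁ x₂) *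
        ∑ ξ₁ ∈ range u₁, ∑ ξ₂ ∈ range u₂, gu ξ₁ ξ₂ := by
  calc ∑ a ∈ range (t₁ * u₁), ∑ b ∈ range (t₂ * u₂), g a b
      = ∑ a ∈ range (t₁ * u₁), ∑ x₂ ∈ range t₂, ∑ ξ₂ ∈ range u₂, g a (P₂ * x₂ + Q₂ * ξ₂) :=
        sum_congr rfl fun a _ => (hg₂ a).sum_range_mul h₂
    _ = ∑ x₁ ∈ range t₁, ∑ ξ₁ ∈ range u₁, ∑ x₂ ∈ range t₂, ∑ ξ₂ ∈ range u₂,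
          g (P₁ * x₁ + Q₁ * ξ₁) (P₂ * x₂ + Q₂ * ξ₂) :=
        Periodic.sum_range_mul
          (F := fun a => ∑ x₂ ∈ range t₂, ∑ ξ₂ ∈ range u₂, g a (P₂ * x₂ + Q₂ * ξ₂))
          (fun a => sum_congr rfl fun _ _ => sum_congr rfl fun _ _ => hg₁ _ a) h₁
    _ = _ := by simp only [h, ← sum_mul_sum]

end TripleSums

section KloostermanTerm

variable (N : ℕ) (n1 n2 m1 m2 : ℤ) (D1 D2 : ℕ)

/-- The conditions `gcd(Bj, Cj, Dj) = 1` of `Kloosterman3` are dropped: they follow from the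
Bezout conditions. -/
noncomputable def kloostermanTerm (B1 C1 Y1 Z1 B2 C2 Y2 Z2 : ℤ) : ℂ :=
  if D1 * C2 + B1 * B2 + D2 * C1 ≡ 0 [ZMOD D1 * D2] ∧ (N : ℤ) ∣ B1 ∧
      Y1 * B1 + Z1 * C1 ≡ 1 [ZMOD D1] ∧ Y2 * B2 + Z2 * C2 ≡ 1 [ZMOD D2] then
    eChar (((n1 * B1 + m1 * (Y1 * D2 - Z1 * B2) : ℤ) : ℝ) / D1 +
      ((n2 * B2 + m2 * (Y2 * D1 - Z2 * B1) : ℤ) : ℝ) / D2)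
  else 0

variable {N n1 n2 m1 m2 D1 D2} in
lemma kloostermanTerm_congr {B1 C1 Y1 Z1 B2 C2 Y2 Z2 B1' C1' Y1' Z1' B2' C2' Y2' Z2' : ℤ}
    (hcompat : D1 * C2 + B1 * B2 + D2 * C1 ≡ D1 * C2' + B1' * B2' + D2 * C1' [ZMOD D1 * D2])
    (hlevel : (N : ℤ) ∣ B1 ↔ (N : ℤ) ∣ B1')
    (hbezout1 : Y1 * B1 + Z1 * C1 ≡ Y1' * B1' + Z1' * C1' [ZMOD D1])
    (hbezout2 : Y2 * B2 + Z2 * C2 ≡ Y2' * B2' + Z2' * C2' [ZMOD D2])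
    (hphase1 : n1 * B1 + m1 * (Y1 * D2 - Z1 * B2) ≡
      n1 * B1' + m1 * (Y1' * D2 - Z1' * B2') [ZMOD D1])
    (hphase2 : n2 * B2 + m2 * (Y2 * D1 - Z2 * B1) ≡
      n2 * B2' + m2 * (Y2' * D1 - Z2' * B1') [ZMOD D2]) :
    kloostermanTerm N n1 n2 m1 m2 D1 D2 B1' C1' Y1' Z1' B2' C2' Y2' Z2' =
      kloostermanTerm N n1 n2 m1 m2 D1 D2 B1 C1 Y1 Z1 B2 C2 Y2 Z2 := by
  unfold kloostermanTerm
  refine if_congr ?_ ?_ rfl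
  · exact and_congr hcompat.modEq_iff_left.symm <| and_congr hlevel.symm <|
      and_congr hbezout1.modEq_iff_left.symm hbezout2.modEq_iff_left.symm
  · rw [eChar_add, eChar_add, eChar_intCast_div_of_modEq hphase1,
      eChar_intCast_div_of_modEq hphase2]

lemma kloostermanTerm_periodic_C1 (B1 Y1 Z1 B2 C2 Y2 Z2 : ℤ) :
    Periodic (kloostermanTerm N n1 n2 m1 m2 D1 D2 B1 · Y1 Z1 B2 C2 Y2 Z2) D1 := fun _ =>
  kloostermanTerm_congr (Int.modEq_iff_add_fac.2 ⟨1, by ring⟩) .rfl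
    (Int.modEq_iff_add_fac.2 ⟨Z1, by ring⟩) .rfl .rfl .rfl

lemma kloostermanTerm_periodic_Y1 (B1 C1 Z1 B2 C2 Y2 Z2 : ℤ) :
    Periodic (kloostermanTerm N n1 n2 m1 m2 D1 D2 B1 C1 · Z1 B2 C2 Y2 Z2) D1 := fun _ =>
  kloostermanTerm_congr .rfl .rfl (Int.modEq_iff_add_fac.2 ⟨B1, by ring⟩) .rfl
    (Int.modEq_iff_add_fac.2 ⟨m1 * D2, by ring⟩) .rfl

lemma kloostermanTerm_periodic_Z1 (B1 C1 Y1 B2 C2 Y2 Z2 : ℤ) :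
    Periodic (kloostermanTerm N n1 n2 m1 m2 D1 D2 B1 C1 Y1 · B2 C2 Y2 Z2) D1 := fun _ =>
  kloostermanTerm_congr .rfl .rfl (Int.modEq_iff_add_fac.2 ⟨C1, by ring⟩) .rfl
    (Int.modEq_iff_add_fac.2 ⟨-(m1 * B2), by ring⟩) .rfl

lemma kloostermanTerm_periodic_C2 (B1 C1 Y1 Z1 B2 Y2 Z2 : ℤ) :
    Periodic (kloostermanTerm N n1 n2 m1 m2 D1 D2 B1 C1 Y1 Z1 B2 · Y2 Z2) D2 := fun _ =>
  kloostermanTerm_congr (Int.modEq_iff_add_fac.2 ⟨1, by ring⟩) .rfl .rfl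
    (Int.modEq_iff_add_fac.2 ⟨Z2, by ring⟩) .rfl .rfl

lemma kloostermanTerm_periodic_Y2 (B1 C1 Y1 Z1 B2 C2 Z2 : ℤ) :
    Periodic (kloostermanTerm N n1 n2 m1 m2 D1 D2 B1 C1 Y1 Z1 B2 C2 · Z2) D2 := fun _ =>
  kloostermanTerm_congr .rfl .rfl .rfl (Int.modEq_iff_add_fac.2 ⟨B2, by ring⟩) .rfl
    (Int.modEq_iff_add_fac.2 ⟨m2 * D1, by ring⟩)

lemma kloostermanTerm_periodic_Z2 (B1 C1 Y1 Z1 B2 C2 Y2 : ℤ) :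
    Periodic (kloostermanTerm N n1 n2 m1 m2 D1 D2 B1 C1 Y1 Z1 B2 C2 Y2 ·) D2 := fun _ =>
  kloostermanTerm_congr .rfl .rfl .rfl (Int.modEq_iff_add_fac.2 ⟨C2, by ring⟩) .rfl
    (Int.modEq_iff_add_fac.2 ⟨-(m2 * B1), by ring⟩)

variable {N D1} in
lemma kloostermanTerm_add_B1 (hN : (N : ℤ) ∣ D1) (B1 C1 Y1 Z1 B2 C2 Y2 Z2 : ℤ) :
    kloostermanTerm N n1 n2 m1 m2 D1 D2 (B1 + D1) C1 Y1 Z1 B2 C2 Y2 Z2 =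
      kloostermanTerm N n1 n2 m1 m2 D1 D2 B1 C1 Y1 Z1 B2 (C2 + B2) (Y2 - Z2) Z2 :=
  kloostermanTerm_congr (congrArg (· % _) (by ring)) (dvd_add_left hN).symm
    (Int.modEq_iff_add_fac.2 ⟨Y1, by ring⟩) (congrArg (· % _) (by ring))
    (Int.modEq_iff_add_fac.2 ⟨n1, by ring⟩) (congrArg (· % _) (by ring))

lemma kloostermanTerm_add_B2 (B1 C1 Y1 Z1 B2 C2 Y2 Z2 : ℤ) :
    kloostermanTerm N n1 n2 m1 m2 D1 D2 B1 C1 Y1 Z1 (B2 + D2) C2 Y2 Z2 =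
      kloostermanTerm N n1 n2 m1 m2 D1 D2 B1 (C1 + B1) (Y1 - Z1) Z1 B2 C2 Y2 Z2 :=
  kloostermanTerm_congr (congrArg (· % _) (by ring)) .rfl (congrArg (· % _) (by ring))
    (Int.modEq_iff_add_fac.2 ⟨Y2, by ring⟩) (congrArg (· % _) (by ring))
    (Int.modEq_iff_add_fac.2 ⟨n2, by ring⟩)

end KloostermanTerm

section KloostermanInner

variable (N : ℕ) (n1 n2 m1 m2 : ℤ) (D1 D2 : ℕ)

noncomputable def kloostermanInner (B1 B2 : ℤ) : ℂ :=
  tripleSum D1 fun C1 Y1 Z1 => tripleSum D2 fun C2 Y2 Z2 =>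
    kloostermanTerm N n1 n2 m1 m2 D1 D2 B1 C1 Y1 Z1 B2 C2 Y2 Z2

lemma Kloosterman3_eq_sum_kloostermanInner :
    Kloosterman3 N n1 n2 m1 m2 D1 D2 = 1 / ((D1 : ℂ) * D2) *
      ∑ B1 ∈ range D1, ∑ B2 ∈ range D2, kloostermanInner N n1 n2 m1 m2 D1 D2 B1 B2 := by
  unfold Kloosterman3 kloostermanInner tripleSum
  refine congrArg (1 / ((D1 : ℂ) * D2) * ·) ?_
  refine sum_congr rfl fun B1 _ => ?_
  symm
  rw [sum_comm]
  refine sum_congr rfl fun C1 _ => ?_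
  rw [sum_comm]
  refine sum_congr rfl fun Y1 _ => ?_
  rw [sum_comm]
  refine sum_congr rfl fun Z1 _ => sum_congr rfl fun B2 _ => sum_congr rfl fun C2 _ =>
    sum_congr rfl fun Y2 _ => sum_congr rfl fun Z2 _ => if_congr ?_ rfl rfl
  rw [Int.ModEq, Int.zero_emod]
  exact ⟨fun ⟨h, hN, h1, h2⟩ =>
      ⟨h, Nat.coprime_gcd_of_modEq h1, Nat.coprime_gcd_of_modEq h2, hN, h1, h2⟩,
    fun ⟨h, _, _, hN, h1, h2⟩ => ⟨h, hN, h1, h2⟩⟩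

lemma kloostermanInner_periodic_B1 (hN : (N : ℤ) ∣ D1) (B2 : ℤ) :
    Periodic (kloostermanInner N n1 n2 m1 m2 D1 D2 · B2) D1 := fun B1 => by
  simp only [kloostermanInner, kloostermanTerm_add_B1 _ _ _ _ _ hN]
  refine congrArg (tripleSum D1) (funext₃ fun C1 Y1 Z1 => ?_)
  exact tripleSum_shear (kloostermanTerm_periodic_C2 N n1 n2 m1 m2 D1 D2 B1 C1 Y1 Z1 B2)
    (kloostermanTerm_periodic_Y2 N n1 n2 m1 m2 D1 D2 B1 C1 Y1 Z1 B2) B2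

lemma kloostermanInner_periodic_B2 (B1 : ℤ) :
    Periodic (kloostermanInner N n1 n2 m1 m2 D1 D2 B1 ·) D2 := fun B2 => by
  simp only [kloostermanInner, kloostermanTerm_add_B2]
  exact tripleSum_shear (g := fun C1 Y1 Z1 => tripleSum D2 fun C2 Y2 Z2 =>
      kloostermanTerm N n1 n2 m1 m2 D1 D2 B1 C1 Y1 Z1 B2 C2 Y2 Z2)
    (fun Y1 Z1 C1 => congrArg (tripleSum D2) (funext₃ fun C2 Y2 Z2 =>
      kloostermanTerm_periodic_C1 N n1 n2 m1 m2 D1 D2 B1 Y1 Z1 B2 C2 Y2 Z2 C1))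
    (fun C1 Z1 Y1 => congrArg (tripleSum D2) (funext₃ fun C2 Y2 Z2 =>
      kloostermanTerm_periodic_Y1 N n1 n2 m1 m2 D1 D2 B1 C1 Z1 B2 C2 Y2 Z2 Y1)) B1

end KloostermanInner

/-- `(b1, …, z2)` are the coordinates at `t1, t2` of `(B1, …, Z2)` (with `ūj = uji`).
`B1, B2` are fixed modulo `t1 t2` rather than `t1`, `t2` because the compatibility condition
sees `B1 B2` modulo `t1 t2`. -/
structure TwistedResidues (t1 t2 u1 u2 : ℕ) (u1i u2i : ℤ)
    (B1 C1 Y1 Z1 B2 C2 Y2 Z2 b1 c1 y1 z1 b2 c2 y2 z2 : ℤ) : Prop where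
  inv_u1 : u1i * u1 ≡ 1 [ZMOD t1 * t2]
  inv_u2 : u2i * u2 ≡ 1 [ZMOD t1 * t2]
  modEq_B1 : B1 ≡ u1i * u2 * b1 [ZMOD t1 * t2]
  modEq_B2 : B2 ≡ u2i * u1 * b2 [ZMOD t1 * t2]
  modEq_C1 : C1 ≡ u2i * c1 [ZMOD t1]
  modEq_Y1 : Y1 ≡ u1 * u2i * y1 [ZMOD t1]
  modEq_Z1 : Z1 ≡ u2 * z1 [ZMOD t1]
  modEq_C2 : C2 ≡ u1i * c2 [ZMOD t2]
  modEq_Y2 : Y2 ≡ u2 * u1i * y2 [ZMOD t2]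
  modEq_Z2 : Z2 ≡ u1 * z2 [ZMOD t2]

namespace TwistedResidues

variable {t1 t2 u1 u2 : ℕ} {u1i u2i : ℤ} {B1 C1 Y1 Z1 B2 C2 Y2 Z2 b1 c1 y1 z1 b2 c2 y2 z2 : ℤ}
  (h : TwistedResidues t1 t2 u1 u2 u1i u2i B1 C1 Y1 Z1 B2 C2 Y2 Z2 b1 c1 y1 z1 b2 c2 y2 z2)
include h

lemma swap :
    TwistedResidues t2 t1 u2 u1 u2i u1i B2 C2 Y2 Z2 B1 C1 Y1 Z1 b2 c2 y2 z2 b1 c1 y1 z1 := by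
  have hcomm : ((t2 : ℤ) * t1) = t1 * t2 := mul_comm _ _
  exact ⟨hcomm ▸ h.inv_u2, hcomm ▸ h.inv_u1, hcomm ▸ h.modEq_B2, hcomm ▸ h.modEq_B1, h.modEq_C2,
    h.modEq_Y2, h.modEq_Z2, h.modEq_C1, h.modEq_Y1, h.modEq_Z1⟩

lemma intCast_zmod {d : ℕ} (hd : d ∣ t1) :
    (u1i : ZMod d) * u1 = 1 ∧ (u2i : ZMod d) * u2 = 1 ∧ (B1 : ZMod d) = u1i * u2 * b1 ∧
      (B2 : ZMod d) = u2i * u1 * b2 ∧ (C1 : ZMod d) = u2i * c1 ∧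
      (Y1 : ZMod d) = u1 * u2i * y1 ∧ (Z1 : ZMod d) = u2 * z1 := by
  have hd₁ : (d : ℤ) ∣ t1 := Int.natCast_dvd_natCast.2 hd
  have hd₂ : (d : ℤ) ∣ t1 * t2 := hd₁.mul_right _
  have cast {a b n : ℤ} (hn : (d : ℤ) ∣ n) (hab : a ≡ b [ZMOD n]) : (a : ZMod d) = b :=
    (ZMod.intCast_eq_intCast_iff _ _ d).2 (hab.of_dvd hn)
  refine ⟨?_, ?_, ?_, ?_, ?_, ?_, ?_⟩
  · simpa using cast hd₂ h.inv_u1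
  · simpa using cast hd₂ h.inv_u2
  · simpa using cast hd₂ h.modEq_B1
  · simpa using cast hd₂ h.modEq_B2
  · simpa using cast hd₁ h.modEq_C1
  · simpa using cast hd₁ h.modEq_Y1
  · simpa using cast hd₁ h.modEq_Z1

lemma bezout : Y1 * B1 + Z1 * C1 ≡ y1 * b1 + z1 * c1 [ZMOD t1] := by
  obtain ⟨e1, e2, eB1, -, eC1, eY1, eZ1⟩ := h.intCast_zmod dvd_rfl
  rw [← ZMod.intCast_eq_intCast_iff]
  push_cast
  rw [eB1, eC1, eY1, eZ1]
  linear_combination (y1 * b1 * u2i * u2 : ZMod t1) * e1 + (y1 * b1 + z1 * c1 : ZMod t1) * e2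

lemma phase (n m : ℤ) :
    n * B1 + m * (Y1 * (t2 * u2) - Z1 * B2) ≡
      u1 * (u1i ^ 2 * u2 * n * b1 + m * (y1 * t2 - z1 * b2)) [ZMOD t1] := by
  obtain ⟨e1, e2, eB1, eB2, -, eY1, eZ1⟩ := h.intCast_zmod dvd_rfl
  rw [← ZMod.intCast_eq_intCast_iff]
  push_cast
  rw [eB1, eB2, eY1, eZ1]
  linear_combination (-(n * u1i * u2 * b1) : ZMod t1) * e1 +
    (m * u1 * y1 * t2 - m * u1 * z1 * b2 : ZMod t1) * e2

lemma compat :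
    t1 * u1 * C2 + B1 * B2 + t2 * u2 * C1 ≡ t1 * c2 + b1 * b2 + t2 * c1 [ZMOD t1 * t2] := by
  obtain ⟨e1, e2, -, -, eC1, -, -⟩ := h.intCast_zmod dvd_rfl
  obtain ⟨-, f1, -, -, fC2, -, -⟩ := h.swap.intCast_zmod dvd_rfl
  have hC1 : (t1 : ℤ) ∣ u2 * C1 - c1 := by
    rw [← ZMod.intCast_zmod_eq_zero_iff_dvd]
    push_cast
    linear_combination (u2 : ZMod t1) * eC1 + (c1 : ZMod t1) * e2
  have hC2 : (t2 : ℤ) ∣ u1 * C2 - c2 := by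
    rw [← ZMod.intCast_zmod_eq_zero_iff_dvd]
    push_cast
    linear_combination (u1 : ZMod t2) * fC2 + (c2 : ZMod t2) * f1
  have hB : (t1 : ℤ) * t2 ∣ B1 * B2 - b1 * b2 := by
    have cast {a b : ℤ} (hab : a ≡ b [ZMOD t1 * t2]) : (a : ZMod (t1 * t2)) = b :=
      (ZMod.intCast_eq_intCast_iff _ _ _).2 (by simpa using hab)
    have g1 := cast h.inv_u1
    have g2 := cast h.inv_u2
    have gB1 := cast h.modEq_B1
    have gB2 := cast h.modEq_B2
    push_cast at g1 g2 gB1 gB2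
    rw [← Nat.cast_mul, ← ZMod.intCast_zmod_eq_zero_iff_dvd]
    push_cast
    rw [gB1, gB2]
    linear_combination (b1 * b2 * u2i * u2 : ZMod (t1 * t2)) * g1 + (b1 * b2 : ZMod (t1 * t2)) * g2
  refine (Int.modEq_iff_dvd.2 ?_).symm
  rw [show t1 * u1 * C2 + B1 * B2 + t2 * u2 * C1 - (t1 * c2 + b1 * b2 + t2 * c1) =
    t1 * (u1 * C2 - c2) + (B1 * B2 - b1 * b2) + t2 * (u2 * C1 - c1) by ring]
  refine dvd_add (dvd_add (mul_dvd_mul_left _ hC2) hB) ?_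
  rw [mul_comm (t1 : ℤ)]
  exact mul_dvd_mul_left _ hC1

lemma dvd_B1_iff {d : ℕ} (hd : d ∣ t1) : (d : ℤ) ∣ B1 ↔ (d : ℤ) ∣ b1 := by
  obtain ⟨e1, e2, eB1, -⟩ := h.intCast_zmod hd
  have hunit : IsUnit ((u1i : ZMod d) * u2) :=
    IsUnit.of_mul_eq_one ((u1 : ZMod d) * u2i) (by linear_combination (u2i * u2 : ZMod d) * e1 + e2)
  rw [← ZMod.intCast_zmod_eq_zero_iff_dvd, ← ZMod.intCast_zmod_eq_zero_iff_dvd, eB1,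
    hunit.mul_right_eq_zero]

end TwistedResidues

section LocalFactors

variable {t1 u1 t2 u2 : ℕ} {u1i u2i t1i t2i : ℤ}
  {B1 C1 Y1 Z1 B2 C2 Y2 Z2 b1 c1 y1 z1 b2 c2 y2 z2 β1 γ1 η1 ζ1 β2 γ2 η2 ζ2 : ℤ}
  (ht : TwistedResidues t1 t2 u1 u2 u1i u2i B1 C1 Y1 Z1 B2 C2 Y2 Z2 b1 c1 y1 z1 b2 c2 y2 z2)
  (hu : TwistedResidues u1 u2 t1 t2 t1i t2i B1 C1 Y1 Z1 B2 C2 Y2 Z2 β1 γ1 η1 ζ1 β2 γ2 η2 ζ2)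
include ht hu

lemma TwistedResidues.compat_modEq_zero_iff (hcop : Nat.Coprime (t1 * t2) (u1 * u2)) :
    (t1 * u1 : ℕ) * C2 + B1 * B2 + (t2 * u2 : ℕ) * C1 ≡ 0 [ZMOD (t1 * u1 : ℕ) * (t2 * u2 : ℕ)] ↔
      t1 * c2 + b1 * b2 + t2 * c1 ≡ 0 [ZMOD t1 * t2] ∧
        u1 * γ2 + β1 * β2 + u2 * γ1 ≡ 0 [ZMOD u1 * u2] := by
  have hcu := hu.compat
  rw [mul_comm (u1 : ℤ) t1, mul_comm (u2 : ℤ) t2] at hcu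
  rw [show ((t1 * u1 : ℕ) : ℤ) * (t2 * u2 : ℕ) = (t1 * t2 : ℕ) * (u1 * u2 : ℕ) by push_cast; ring,
    Int.modEq_mul_iff_of_coprime hcop]
  push_cast
  exact and_congr ht.compat.modEq_iff_left hcu.modEq_iff_left

lemma TwistedResidues.dvd_B1_iff_and {N : ℕ} (hcop : t1.Coprime u1) (hN : N ∣ t1 * u1) :
    (N : ℤ) ∣ B1 ↔ (N.gcd t1 : ℤ) ∣ b1 ∧ (N.gcd u1 : ℤ) ∣ β1 := by
  have hN' : N = N.gcd t1 * N.gcd u1 := by rw [← Nat.Coprime.gcd_mul N hcop, Nat.gcd_eq_left hN]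
  have hgcop : IsCoprime (N.gcd t1 : ℤ) (N.gcd u1) := Nat.isCoprime_iff_coprime.2 <|
    hcop.of_dvd (Nat.gcd_dvd_right N t1) (Nat.gcd_dvd_right N u1)
  rw [← ht.dvd_B1_iff (Nat.gcd_dvd_right N t1), ← hu.dvd_B1_iff (Nat.gcd_dvd_right N u1)]
  conv_lhs => rw [hN', Nat.cast_mul]
  exact ⟨fun h => ⟨(dvd_mul_right _ _).trans h, (dvd_mul_left _ _).trans h⟩,
    fun ⟨h1, h2⟩ => hgcop.mul_dvd h1 h2⟩

lemma TwistedResidues.bezout_modEq_one_iff (hcop : t1.Coprime u1) :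
    Y1 * B1 + Z1 * C1 ≡ 1 [ZMOD (t1 * u1 : ℕ)] ↔
      y1 * b1 + z1 * c1 ≡ 1 [ZMOD t1] ∧ η1 * β1 + ζ1 * γ1 ≡ 1 [ZMOD u1] := by
  rw [Nat.cast_mul, Int.modEq_mul_iff_of_coprime hcop]
  exact and_congr ht.bezout.modEq_iff_left hu.bezout.modEq_iff_left

lemma TwistedResidues.eChar_phase (hcop : t1.Coprime u1) (ht1 : t1 ≠ 0) (hu1 : u1 ≠ 0) (n m : ℤ) :
    eChar (((n * B1 + m * (Y1 * (t2 * u2 : ℕ) - Z1 * B2) : ℤ) : ℝ) / (t1 * u1 : ℕ)) =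
      eChar (((u1i ^ 2 * u2 * n * b1 + m * (y1 * t2 - z1 * b2) : ℤ) : ℝ) / t1) *
        eChar (((t1i ^ 2 * t2 * n * β1 + m * (η1 * u2 - ζ1 * β2) : ℤ) : ℝ) / u1) := by
  refine eChar_intCast_div_mul hcop ht1 hu1 ?_ ?_
  · push_cast
    exact ht.phase n m
  · push_cast
    rw [mul_comm (t2 : ℤ)]
    exact hu.phase n m

end LocalFactors

section Multiplicativity

variable {N : ℕ} {n1 n2 m1 m2 : ℤ} {t1 u1 t2 u2 : ℕ} {u1i u2i t1i t2i : ℤ}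

lemma kloostermanTerm_mul (hcop : Nat.Coprime (t1 * t2) (u1 * u2)) (hN : N ∣ t1 * u1)
    (ht1 : t1 ≠ 0) (ht2 : t2 ≠ 0) (hu1 : u1 ≠ 0) (hu2 : u2 ≠ 0)
    {B1 C1 Y1 Z1 B2 C2 Y2 Z2 b1 c1 y1 z1 b2 c2 y2 z2 β1 γ1 η1 ζ1 β2 γ2 η2 ζ2 : ℤ}
    (ht : TwistedResidues t1 t2 u1 u2 u1i u2i B1 C1 Y1 Z1 B2 C2 Y2 Z2 b1 c1 y1 z1 b2 c2 y2 z2)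
    (hu : TwistedResidues u1 u2 t1 t2 t1i t2i B1 C1 Y1 Z1 B2 C2 Y2 Z2 β1 γ1 η1 ζ1 β2 γ2 η2 ζ2) :
    kloostermanTerm N n1 n2 m1 m2 (t1 * u1) (t2 * u2) B1 C1 Y1 Z1 B2 C2 Y2 Z2 =
      kloostermanTerm (N.gcd t1) (u1i ^ 2 * u2 * n1) (u2i ^ 2 * u1 * n2) m1 m2 t1 t2
          b1 c1 y1 z1 b2 c2 y2 z2 *
        kloostermanTerm (N.gcd u1) (t1i ^ 2 * t2 * n1) (t2i ^ 2 * t1 * n2) m1 m2 u1 u2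
          β1 γ1 η1 ζ1 β2 γ2 η2 ζ2 := by
  have hcop1 : t1.Coprime u1 := hcop.of_dvd (dvd_mul_right _ _) (dvd_mul_right _ _)
  have hcop2 : t2.Coprime u2 := hcop.of_dvd (dvd_mul_left _ _) (dvd_mul_left _ _)
  unfold kloostermanTerm
  rw [ite_zero_mul_ite_zero]
  refine if_congr ?_ ?_ rfl
  · rw [ht.compat_modEq_zero_iff hu hcop, ht.dvd_B1_iff_and hu hcop1 hN,
      ht.bezout_modEq_one_iff hu hcop1, ht.swap.bezout_modEq_one_iff hu.swap hcop2]
    exact ⟨fun ⟨⟨a, a'⟩, ⟨b, b'⟩, ⟨c, c'⟩, d, d'⟩ => ⟨⟨a, b, c, d⟩, a', b', c', d'⟩,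
      fun ⟨⟨a, b, c, d⟩, a', b', c', d'⟩ => ⟨⟨a, a'⟩, ⟨b, b'⟩, ⟨c, c'⟩, d, d'⟩⟩
  · rw [eChar_add, ht.eChar_phase hu hcop1 ht1 hu1, ht.swap.eChar_phase hu.swap hcop2 ht2 hu2,
      eChar_add, eChar_add]
    ring

lemma kloostermanInner_mul (hcop : Nat.Coprime (t1 * t2) (u1 * u2)) (hN : N ∣ t1 * u1)
    (ht1 : t1 ≠ 0) (ht2 : t2 ≠ 0) (hu1 : u1 ≠ 0) (hu2 : u2 ≠ 0)
    (hu1i : u1i * u1 ≡ 1 [ZMOD t1 * t2]) (hu2i : u2i * u2 ≡ 1 [ZMOD t1 * t2])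
    (ht1i : t1i * t1 ≡ 1 [ZMOD u1 * u2]) (ht2i : t2i * t2 ≡ 1 [ZMOD u1 * u2]) {e f : ℤ}
    (he : IsCRTIdempotent (t1 * t2) (u1 * u2) e) (hf : IsCRTIdempotent (u1 * u2) (t1 * t2) f)
    {B1 B2 b1 b2 β1 β2 : ℤ}
    (hB1t : B1 ≡ u1i * u2 * b1 [ZMOD t1 * t2]) (hB2t : B2 ≡ u2i * u1 * b2 [ZMOD t1 * t2])
    (hB1u : B1 ≡ t1i * t2 * β1 [ZMOD u1 * u2]) (hB2u : B2 ≡ t2i * t1 * β2 [ZMOD u1 * u2]) :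
    kloostermanInner N n1 n2 m1 m2 (t1 * u1) (t2 * u2) B1 B2 =
      kloostermanInner (N.gcd t1) (u1i ^ 2 * u2 * n1) (u2i ^ 2 * u1 * n2) m1 m2 t1 t2 b1 b2 *
        kloostermanInner (N.gcd u1) (t1i ^ 2 * t2 * n1) (t2i ^ 2 * t1 * n2) m1 m2 u1 u2 β1 β2 := by
  have he₁ := he.of_dvd (dvd_mul_right _ _) (dvd_mul_right _ _)
  have hf₁ := hf.of_dvd (dvd_mul_right _ _) (dvd_mul_right _ _)
  have he₂ := he.of_dvd (dvd_mul_left _ _) (dvd_mul_left _ _)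
  have hf₂ := hf.of_dvd (dvd_mul_left _ _) (dvd_mul_left _ _)
  have units_t₁ := isUnit_zmod_of_inverses hu1i hu2i (dvd_mul_right t1 t2)
  have units_t₂ := isUnit_zmod_of_inverses hu1i hu2i (dvd_mul_left t2 t1)
  have units_u₁ := isUnit_zmod_of_inverses ht1i ht2i (dvd_mul_right u1 u2)
  have units_u₂ := isUnit_zmod_of_inverses ht1i ht2i (dvd_mul_left u2 u1)
  unfold kloostermanInner
  refine tripleSum_mul
    (he₁.isCRTPair hf₁ (α := u2i) (β := t2i) (by simp [units_t₁]) (by simp [units_u₁]))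
    (he₁.isCRTPair hf₁ (α := u1 * u2i) (β := t1 * t2i) (by simp [units_t₁]) (by simp [units_u₁]))
    (he₁.isCRTPair hf₁ (α := u2) (β := t2) (by simp [units_t₁]) (by simp [units_u₁]))
    (fun Y1 Z1 C1 => congrArg (tripleSum _) (funext₃ fun C2 Y2 Z2 =>
      kloostermanTerm_periodic_C1 N n1 n2 m1 m2 _ _ B1 Y1 Z1 B2 C2 Y2 Z2 C1))
    (fun C1 Z1 Y1 => congrArg (tripleSum _) (funext₃ fun C2 Y2 Z2 =>
      kloostermanTerm_periodic_Y1 N n1 n2 m1 m2 _ _ B1 C1 Z1 B2 C2 Y2 Z2 Y1))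
    (fun C1 Y1 Z1 => congrArg (tripleSum _) (funext₃ fun C2 Y2 Z2 =>
      kloostermanTerm_periodic_Z1 N n1 n2 m1 m2 _ _ B1 C1 Y1 B2 C2 Y2 Z2 Z1))
    fun c1 γ1 y1 η1 z1 ζ1 => tripleSum_mul
      (he₂.isCRTPair hf₂ (α := u1i) (β := t1i) (by simp [units_t₂]) (by simp [units_u₂]))
      (he₂.isCRTPair hf₂ (α := u2 * u1i) (β := t2 * t1i) (by simp [units_t₂]) (by simp [units_u₂]))
      (he₂.isCRTPair hf₂ (α := u1) (β := t1) (by simp [units_t₂]) (by simp [units_u₂]))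
      (kloostermanTerm_periodic_C2 N n1 n2 m1 m2 _ _ _ _ _ _ B2)
      (kloostermanTerm_periodic_Y2 N n1 n2 m1 m2 _ _ _ _ _ _ B2)
      (kloostermanTerm_periodic_Z2 N n1 n2 m1 m2 _ _ _ _ _ _ B2)
      fun c2 γ2 y2 η2 z2 ζ2 => kloostermanTerm_mul hcop hN ht1 ht2 hu1 hu2
        ⟨hu1i, hu2i, hB1t, hB2t, he₁.modEq_left hf₁ .., he₁.modEq_left hf₁ ..,
          he₁.modEq_left hf₁ .., he₂.modEq_left hf₂ .., he₂.modEq_left hf₂ ..,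
          he₂.modEq_left hf₂ ..⟩
        ⟨ht1i, ht2i, hB1u, hB2u, he₁.modEq_right hf₁ .., he₁.modEq_right hf₁ ..,
          he₁.modEq_right hf₁ .., he₂.modEq_right hf₂ .., he₂.modEq_right hf₂ ..,
          he₂.modEq_right hf₂ ..⟩

lemma sum_sum_kloostermanInner_mul (hcop : Nat.Coprime (t1 * t2) (u1 * u2)) (hN : N ∣ t1 * u1)
    (ht1 : t1 ≠ 0) (ht2 : t2 ≠ 0) (hu1 : u1 ≠ 0) (hu2 : u2 ≠ 0)
    (hu1i : u1i * u1 ≡ 1 [ZMOD t1 * t2]) (hu2i : u2i * u2 ≡ 1 [ZMOD t1 * t2])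
    (ht1i : t1i * t1 ≡ 1 [ZMOD u1 * u2]) (ht2i : t2i * t2 ≡ 1 [ZMOD u1 * u2]) {e f : ℤ}
    (he : IsCRTIdempotent (t1 * t2) (u1 * u2) e) (hf : IsCRTIdempotent (u1 * u2) (t1 * t2) f) :
    ∑ B1 ∈ range (t1 * u1), ∑ B2 ∈ range (t2 * u2),
        kloostermanInner N n1 n2 m1 m2 (t1 * u1) (t2 * u2) B1 B2 =
      (∑ b1 ∈ range t1, ∑ b2 ∈ range t2,
          kloostermanInner (N.gcd t1) (u1i ^ 2 * u2 * n1) (u2i ^ 2 * u1 * n2) m1 m2 t1 t2 b1 b2) *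
        ∑ β1 ∈ range u1, ∑ β2 ∈ range u2,
          kloostermanInner (N.gcd u1) (t1i ^ 2 * t2 * n1) (t2i ^ 2 * t1 * n2) m1 m2 u1 u2
            β1 β2 := by
  have units_t₁ := isUnit_zmod_of_inverses hu1i hu2i (dvd_mul_right t1 t2)
  have units_t₂ := isUnit_zmod_of_inverses hu1i hu2i (dvd_mul_left t2 t1)
  have units_u₁ := isUnit_zmod_of_inverses ht1i ht2i (dvd_mul_right u1 u2)
  have units_u₂ := isUnit_zmod_of_inverses ht1i ht2i (dvd_mul_left u2 u1)
  exact sum_range_mul_sum_range_mul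
    ((he.of_dvd (dvd_mul_right _ _) (dvd_mul_right _ _)).isCRTPair
      (hf.of_dvd (dvd_mul_right _ _) (dvd_mul_right _ _)) (α := u1i * u2) (β := t1i * t2)
      (by simp [units_t₁]) (by simp [units_u₁]))
    ((he.of_dvd (dvd_mul_left _ _) (dvd_mul_left _ _)).isCRTPair
      (hf.of_dvd (dvd_mul_left _ _) (dvd_mul_left _ _)) (α := u2i * u1) (β := t2i * t1)
      (by simp [units_t₂]) (by simp [units_u₂]))
    (kloostermanInner_periodic_B1 N n1 n2 m1 m2 _ _ (Int.natCast_dvd_natCast.2 hN))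
    (kloostermanInner_periodic_B2 N n1 n2 m1 m2 _ _)
    fun b1 β1 b2 β2 => kloostermanInner_mul hcop hN ht1 ht2 hu1 hu2 hu1i hu2i ht1i ht2i he hf
      (he.modEq_left hf ..) (he.modEq_left hf ..) (he.modEq_right hf ..) (he.modEq_right hf ..)

end Multiplicativity

theorem kloosterman3_twisted_multiplicativity_general
    (N t1 u1 t2 u2 : ℕ) (ht1 : 0 < t1) (ht2 : 0 < t2)
    (hu1 : 0 < u1) (hu2 : 0 < u2)
    (hcop : Nat.Coprime (t1 * t2) (u1 * u2))
    (hN1 : N ∣ t1 * u1)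
    (n1 n2 m1 m2 : ℤ) (u1i u2i t1i t2i : ℤ)
    (hu1i : (u1i * u1) % ((t1 : ℤ) * t2) = 1 % ((t1 : ℤ) * t2))
    (hu2i : (u2i * u2) % ((t1 : ℤ) * t2) = 1 % ((t1 : ℤ) * t2))
    (ht1i : (t1i * t1) % ((u1 : ℤ) * u2) = 1 % ((u1 : ℤ) * u2))
    (ht2i : (t2i * t2) % ((u1 : ℤ) * u2) = 1 % ((u1 : ℤ) * u2)) :
    Kloosterman3 N n1 n2 m1 m2 (t1 * u1) (t2 * u2) =
      Kloosterman3 (Nat.gcd N t1) (u1i ^ 2 * u2 * n1) (u2i ^ 2 * u1 * n2) m1 m2 t1 t2 *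
      Kloosterman3 (Nat.gcd N u1) (t1i ^ 2 * t2 * n1) (t2i ^ 2 * t1 * n2) m1 m2 u1 u2 := by
  have he : IsCRTIdempotent (t1 * t2) (u1 * u2) (u1 * u2 * u1i * u2i) := by
    refine ⟨?_, Int.modEq_zero_iff_dvd.2 ⟨u1i * u2i, by ring⟩⟩
    rw [show (u1 * u2 * u1i * u2i : ℤ) = u1i * u1 * (u2i * u2) by ring, ← mul_one 1]
    exact Int.ModEq.mul hu1i hu2i
  have hf : IsCRTIdempotent (u1 * u2) (t1 * t2) (t1 * t2 * t1i * t2i) := by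
    refine ⟨?_, Int.modEq_zero_iff_dvd.2 ⟨t1i * t2i, by ring⟩⟩
    rw [show (t1 * t2 * t1i * t2i : ℤ) = t1i * t1 * (t2i * t2) by ring, ← mul_one 1]
    exact Int.ModEq.mul ht1i ht2i
  rw [Kloosterman3_eq_sum_kloostermanInner, Kloosterman3_eq_sum_kloostermanInner,
    Kloosterman3_eq_sum_kloostermanInner, sum_sum_kloostermanInner_mul hcop hN1 ht1.ne' ht2.ne'
      hu1.ne' hu2.ne' hu1i hu2i ht1i ht2i he hf]
  push_cast
  ring

/-- twisted multiplicativity of the GL(3) Kloosterman sum: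
if `D1 = t1 u1`, `D2 = t2 u2` with `(t1 t2, u1 u2) = 1`, `N ∣ t1 u1`, `N ∣ t2 u2`, then
`S^{(N)}(n1,n2,m1,m2;t1u1,t2u2)
  = S^{(gcd(N,t1))}(ū1² u2 n1, ū2² u1 n2, m1, m2; t1, t2)
  · S^{(gcd(N,u1))}(t̄1² t2 n1, t̄2² t1 n2, m1, m2; u1, u2)`,
where `ū1 u1 ≡ ū2 u2 ≡ 1 (mod t1 t2)` and `t̄1 t1 ≡ t̄2 t2 ≡ 1 (mod u1 u2)`. -/
theorem kloosterman3_twisted_multiplicativity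
    (N t1 u1 t2 u2 : ℕ) (hN : 0 < N) (ht1 : 0 < t1) (ht2 : 0 < t2)
    (hu1 : 0 < u1) (hu2 : 0 < u2)
    (hcop : Nat.Coprime (t1 * t2) (u1 * u2))
    (hN1 : N ∣ t1 * u1) (hN2 : N ∣ t2 * u2)
    (n1 n2 m1 m2 : ℤ) (u1i u2i t1i t2i : ℤ)
    (hu1i : (u1i * u1) % ((t1 : ℤ) * t2) = 1 % ((t1 : ℤ) * t2))
    (hu2i : (u2i * u2) % ((t1 : ℤ) * t2) = 1 % ((t1 : ℤ) * t2))
    (ht1i : (t1i * t1) % ((u1 : ℤ) * u2) = 1 % ((u1 : ℤ) * u2))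
    (ht2i : (t2i * t2) % ((u1 : ℤ) * u2) = 1 % ((u1 : ℤ) * u2)) :
    Kloosterman3 N n1 n2 m1 m2 (t1 * u1) (t2 * u2) =
      Kloosterman3 (Nat.gcd N t1) (u1i ^ 2 * u2 * n1) (u2i ^ 2 * u1 * n2) m1 m2 t1 t2 *
      Kloosterman3 (Nat.gcd N u1) (t1i ^ 2 * t2 * n1) (t2i ^ 2 * t1 * n2) m1 m2 u1 u2 :=
  kloosterman3_twisted_multiplicativity_general N t1 u1 t2 u2 ht1 ht2 hu1 hu2 hcop hN1 n1 n2 m1 m2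
    u1i u2i t1i t2i hu1i hu2i ht1i ht2i
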